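/- arXiv:1307.5610 — 6 statements merged into one kernel-verified Lean document; each statement's English description precedes it below -/
import Mathlib

section
/- Let X_n be defined by X_0 = 0 and X_n =^d X_{I_n} + 1 for n ≥ 1, where P(I_n = k) = C(n,k)(p^k q^{n-k} − p^k(q−p)^{n-k})/(1−q^n). Then the exponential generating function P(z,y) := ∑_{n≥0} E(e^{X_n y}) z^n/n! satisfies the functional equation P(z,y) = e^y (e^{qz} − e^{(q−p)z}) P(pz, y) + P(qz, y). -/
/-!
Since `e^{X_n y} = e^y e^{X_{I_n} y}`, the moments `M n = E(e^{X_n y})` satisfy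
`M n (1 - q^n) = e^y ∑_{k<n} C(n,k) p^k (q^{n-k} - (q-p)^{n-k}) M k`. The sum may be extended to
`k = n`, where `q^0 - (q-p)^0 = 0`, and then it is exactly the `n`-th coefficient of the binomial
convolution of the EGFs of `M k (pz)^k` and of `e^y ((qz)^m - ((q-p)z)^m)`, i.e. of
`P(pz) · e^y (e^{qz} - e^{(q-p)z})`; the left side is the `n`-th coefficient of `P(z) - P(qz)`.
All series converge absolutely because the `P(I_n = k)` form a probability distribution, which
gives `|M n| ≤ |M 0| e^{|y| n}`.
-/

open Finset

/-- `P(I_n = k)`. -/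
noncomputable def splitProb (p q : ℝ) (n k : ℕ) : ℝ :=
  (n.choose k : ℝ) * (p ^ k * q ^ (n - k) - p ^ k * (q - p) ^ (n - k)) / (1 - q ^ n)

theorem sum_range_choose_mul_pow_sub_pow (p a b : ℝ) (n : ℕ) :
    ∑ k ∈ range n, (n.choose k : ℝ) * (p ^ k * a ^ (n - k) - p ^ k * b ^ (n - k)) =
      (p + a) ^ n - (p + b) ^ n := by
  simp only [add_pow, sum_range_succ, Nat.sub_self, pow_zero, mul_one, Nat.choose_self,
    Nat.cast_one, add_sub_add_right_eq_sub, ← sum_sub_distrib]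
  exact sum_congr rfl fun k _ => by ring

theorem splitProb_nonneg {p q : ℝ} (hp : 0 ≤ p) (hpq : p ≤ q) (hq : q ≤ 1) (n k : ℕ) :
    0 ≤ splitProb p q n k := by
  have hqp : (q - p) ^ (n - k) ≤ q ^ (n - k) := pow_le_pow_left₀ (by linarith) (by linarith) _
  have hD : 0 ≤ 1 - q ^ n := sub_nonneg.2 (pow_le_one₀ (by linarith) hq)
  have hw : 0 ≤ p ^ k * q ^ (n - k) - p ^ k * (q - p) ^ (n - k) := by
    rw [← mul_sub]; exact mul_nonneg (pow_nonneg hp k) (sub_nonneg.2 hqp)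
  unfold splitProb
  positivity

theorem sum_splitProb {p q : ℝ} (hpq : p + q = 1) {n : ℕ} (hn : 1 - q ^ n ≠ 0) :
    ∑ k ∈ range n, splitProb p q n k = 1 := by
  simp only [splitProb, ← sum_div, sum_range_choose_mul_pow_sub_pow, hpq, add_sub_cancel,
    one_pow, div_self hn]

theorem abs_le_mul_pow_of_eq_mul_sum {M : ℕ → ℝ} {w : ℕ → ℕ → ℝ} {a c : ℝ} (hac : |a| ≤ c)
    (hc : 1 ≤ c) (hw : ∀ n k, 0 ≤ w n k) (hw1 : ∀ n, 1 ≤ n → ∑ k ∈ range n, w n k ≤ 1)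
    (hM : ∀ n, 1 ≤ n → M n = a * ∑ k ∈ range n, w n k * M k) (n : ℕ) :
    |M n| ≤ |M 0| * c ^ n := by
  induction n using Nat.strong_induction_on with
  | _ n ih =>
    rcases n with _ | m
    · simp
    have hsum : |∑ k ∈ range (m + 1), w (m + 1) k * M k| ≤ |M 0| * c ^ m :=
      calc |∑ k ∈ range (m + 1), w (m + 1) k * M k|
          ≤ ∑ k ∈ range (m + 1), w (m + 1) k * (|M 0| * c ^ m) := by
            refine (abs_sum_le_sum_abs _ _).trans (sum_le_sum fun k hk => ?_)
            have hk : k < m + 1 := mem_range.1 hk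
            rw [abs_mul, abs_of_nonneg (hw _ _)]
            refine mul_le_mul_of_nonneg_left ((ih k hk).trans ?_) (hw _ _)
            gcongr
            exact Nat.lt_succ_iff.1 hk
        _ = (∑ k ∈ range (m + 1), w (m + 1) k) * (|M 0| * c ^ m) := (sum_mul ..).symm
        _ ≤ |M 0| * c ^ m :=
            mul_le_of_le_one_left (by positivity) (hw1 _ (Nat.le_add_left 1 m))
    calc |M (m + 1)| = |a| * |∑ k ∈ range (m + 1), w (m + 1) k * M k| := by
          rw [hM _ (Nat.le_add_left 1 m), abs_mul]
      _ ≤ c * (|M 0| * c ^ m) := mul_le_mul hac hsum (abs_nonneg _) (by linarith)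
      _ = |M 0| * c ^ (m + 1) := by ring

theorem summable_norm_mul_pow_div_factorial {M : ℕ → ℝ} {C B : ℝ} (hM : ∀ n, |M n| ≤ C * B ^ n)
    (z : ℝ) : Summable fun n => ‖M n * z ^ n / (n.factorial : ℝ)‖ := by
  refine Summable.of_nonneg_of_le (fun n => norm_nonneg _) (fun n => ?_)
    ((Real.summable_pow_div_factorial (B * |z|)).mul_left C)
  rw [Real.norm_eq_abs, abs_div, abs_mul, abs_pow, Nat.abs_cast, mul_pow, ← mul_div_assoc,
    ← mul_assoc]
  gcongr
  exact hM n

theorem tsum_div_factorial_mul_tsum_div_factorial {a b : ℕ → ℝ}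
    (ha : Summable fun n => ‖a n / (n.factorial : ℝ)‖)
    (hb : Summable fun n => ‖b n / (n.factorial : ℝ)‖) :
    (∑' n, a n / (n.factorial : ℝ)) * ∑' n, b n / (n.factorial : ℝ) =
      ∑' n, (∑ k ∈ range (n + 1), (n.choose k : ℝ) * a k * b (n - k)) / (n.factorial : ℝ) := by
  rw [tsum_mul_tsum_eq_tsum_sum_range_of_summable_norm ha hb]
  refine tsum_congr fun n => ?_
  rw [sum_div]
  refine sum_congr rfl fun k hk => ?_
  rw [Nat.cast_choose ℝ (Nat.lt_succ_iff.1 (mem_range.1 hk))]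
  field_simp

theorem summable_norm_mul_pow_sub_pow_div_factorial (c x y : ℝ) :
    Summable fun n => ‖c * (x ^ n - y ^ n) / (n.factorial : ℝ)‖ := by
  refine Summable.of_nonneg_of_le (fun n => norm_nonneg _) (fun n => ?_)
    (((Real.summable_pow_div_factorial |x|).add
      (Real.summable_pow_div_factorial |y|)).mul_left |c|)
  rw [Real.norm_eq_abs, abs_div, abs_mul, Nat.abs_cast, mul_div_assoc, ← add_div]
  gcongr
  exact (abs_sub _ _).trans_eq (by rw [abs_pow, abs_pow])

theorem tsum_mul_pow_sub_pow_div_factorial (c x y : ℝ) :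
    ∑' n, c * (x ^ n - y ^ n) / (n.factorial : ℝ) = c * (Real.exp x - Real.exp y) := by
  simp only [Real.exp_eq_exp_ℝ, NormedSpace.exp_eq_tsum_div, mul_div_assoc, sub_div]
  rw [tsum_mul_left, Summable.tsum_sub (Real.summable_pow_div_factorial x)
    (Real.summable_pow_div_factorial y)]

theorem sum_range_succ_choose_mul_pow_sub_pow (M : ℕ → ℝ) (c p a b z : ℝ) (n : ℕ) :
    ∑ k ∈ range (n + 1), (n.choose k : ℝ) * (M k * (p * z) ^ k) *
        (c * ((a * z) ^ (n - k) - (b * z) ^ (n - k))) =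
      z ^ n * (c * ∑ k ∈ range n, (n.choose k : ℝ) * (p ^ k * a ^ (n - k) - p ^ k * b ^ (n - k)) *
        M k) := by
  rw [sum_range_succ, Nat.sub_self, pow_zero, pow_zero, sub_self, mul_zero, mul_zero, add_zero,
    mul_sum, mul_sum]
  refine sum_congr rfl fun k hk => ?_
  rw [← pow_mul_pow_sub z (mem_range.1 hk).le]
  ring

theorem mul_one_sub_pow_eq_of_eq_mul_sum_splitProb {p q c : ℝ} {M : ℕ → ℝ}
    (hD : ∀ n, 1 ≤ n → 1 - q ^ n ≠ 0)
    (hM : ∀ n, 1 ≤ n → M n = c * ∑ k ∈ range n, splitProb p q n k * M k) (n : ℕ) :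
    M n * (1 - q ^ n) =
      c * ∑ k ∈ range n, (n.choose k : ℝ) * (p ^ k * q ^ (n - k) - p ^ k * (q - p) ^ (n - k)) *
        M k := by
  rcases Nat.eq_zero_or_pos n with rfl | hpos
  · simp
  rw [hM n hpos, mul_assoc, sum_mul]
  congr 1
  refine sum_congr rfl fun k _ => ?_
  unfold splitProb
  field_simp [hD n hpos]

theorem stmt_4_general (p q y : ℝ) (hp : 0 < p) (hpq : p ≤ q) (hq : q = 1 - p)
    (M : ℕ → ℝ)
    (hMrec : ∀ n, 1 ≤ n → M n = Real.exp y *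
      ∑ k ∈ Finset.range n, (n.choose k : ℝ) *
        (p ^ k * q ^ (n - k) - p ^ k * (q - p) ^ (n - k)) / (1 - q ^ n) * M k)
    (P : ℝ → ℝ) (hP : ∀ z, P z = ∑' n : ℕ, M n * z ^ n / (n.factorial : ℝ)) :
    ∀ z : ℝ, P z = Real.exp y * (Real.exp (q * z) - Real.exp ((q - p) * z)) * P (p * z)
      + P (q * z) := by
  intro z
  have hq1 : q < 1 := by linarith
  have hD : ∀ n, 1 ≤ n → 1 - q ^ n ≠ 0 := fun n hn =>
    (sub_pos.2 (pow_lt_one₀ (hp.le.trans hpq) hq1 (by omega))).ne'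
  have hbound : ∀ n, |M n| ≤ |M 0| * Real.exp |y| ^ n :=
    abs_le_mul_pow_of_eq_mul_sum (w := splitProb p q)
      ((abs_of_pos (Real.exp_pos y)).trans_le (Real.exp_le_exp.2 (le_abs_self y)))
      (Real.one_le_exp (abs_nonneg y)) (splitProb_nonneg hp.le hpq hq1.le)
      (fun n hn => (sum_splitProb (by linarith) (hD n hn)).le) hMrec
  have hsum := summable_norm_mul_pow_div_factorial hbound
  have hconv : P (p * z) * (Real.exp y * (Real.exp (q * z) - Real.exp ((q - p) * z))) =
      P z - P (q * z) := by
    simp only [hP]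
    rw [← tsum_mul_pow_sub_pow_div_factorial, tsum_div_factorial_mul_tsum_div_factorial (hsum _)
      (summable_norm_mul_pow_sub_pow_div_factorial ..), ← (hsum z).of_norm.tsum_sub
      (hsum (q * z)).of_norm]
    refine tsum_congr fun n => ?_
    rw [sum_range_succ_choose_mul_pow_sub_pow,
      ← mul_one_sub_pow_eq_of_eq_mul_sum_splitProb hD hMrec, ← sub_div, mul_pow]
    ring
  linarith

/-- The EGF `P(z) = ∑_{n≥0} E(e^{X_n y}) z^n/n!` of the binomial splitting process
satisfies `P(z) = e^y (e^{qz} − e^{(q−p)z}) P(pz) + P(qz)`.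
Here `M n = E(e^{X_n y})` for a fixed real `y`, determined by the distributional
recurrence `X_n =^d X_{I_n} + 1`. -/
theorem stmt_4 (p q y : ℝ) (hp : 0 < p) (hpq : p ≤ q) (hq : q = 1 - p)
    (M : ℕ → ℝ) (hM0 : M 0 = 1)
    (hMrec : ∀ n, 1 ≤ n → M n = Real.exp y *
      ∑ k ∈ Finset.range n, (n.choose k : ℝ) *
        (p ^ k * q ^ (n - k) - p ^ k * (q - p) ^ (n - k)) / (1 - q ^ n) * M k)
    (P : ℝ → ℝ) (hP : ∀ z, P z = ∑' n : ℕ, M n * z ^ n / (n.factorial : ℝ)) :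
    ∀ z : ℝ, P z = Real.exp y * (Real.exp (q * z) - Real.exp ((q - p) * z)) * P (p * z)
      + P (q * z) :=
  stmt_4_general p q y hp hpq hq M hMrec P hP
end

section
/- Let f̃_1(z) := e^{-z} ∑_{n≥0} E(X_n) z^n/n! be the Poisson generating function of the mean of the binomial splitting process X_n. Then f̃_1 satisfies f̃_1(z) = (1 − e^{-pz}) f̃_1(pz) + e^{-pz} f̃_1(qz) + 1 − e^{-pz}, with f̃_1(0) = 0. -/
/-!
Writing `F` for the exponential generating function of the means, the recursion multiplied by
`1 - q^n` is the binomial convolution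
`μ n = q^n μ n + (1 - q^n) + ∑ C(n,k) p^k μ k (q^(n-k) - (q-p)^(n-k))`.
Summed against `z^n/n!` it becomes `F z = F (qz) + e^z - e^(qz) + F (pz) (e^(qz) - e^((q-p)z))`, and
multiplying by `e^(-z) = e^(-pz) e^(-qz)` gives the equation. The Cauchy product is justified by
`|μ n| ≤ n`, which holds because the `P(I_n = k)` are probability weights.
-/

open Finset
open scoped Nat

noncomputable def egf (a : ℕ → ℝ) (x : ℝ) : ℝ := ∑' n, a n * x ^ n / n !

theorem egf_zero (a : ℕ → ℝ) : egf a 0 = a 0 := by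
  rw [egf, tsum_eq_single 0 fun n hn => by simp [zero_pow hn]]
  simp

theorem Real.hasSum_pow_div_factorial (x : ℝ) : HasSum (fun n => x ^ n / n !) (Real.exp x) := by
  rw [Real.exp_eq_exp_ℝ]
  exact NormedSpace.expSeries_div_hasSum_exp x

theorem summable_mul_pow_div_factorial_of_abs_le {a : ℕ → ℝ} (ha : ∀ n, |a n| ≤ n) (x : ℝ) :
    Summable fun n => a n * x ^ n / n ! := by
  refine (Real.summable_pow_div_factorial (2 * |x|)).of_norm_bounded fun n => ?_
  rw [norm_div, norm_mul, norm_pow, Real.norm_eq_abs, Real.norm_eq_abs, Real.norm_natCast, mul_pow]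
  gcongr
  exact (ha n).trans (mod_cast n.lt_two_pow_self.le)

theorem hasSum_egf_mul {a b : ℕ → ℝ} {x : ℝ} (ha : Summable fun n => a n * x ^ n / n !)
    (hb : Summable fun n => b n * x ^ n / n !) :
    HasSum (fun n => (∑ k ∈ range (n + 1), (n.choose k : ℝ) * a k * b (n - k)) * x ^ n / n !)
      (egf a x * egf b x) := by
  refine (hasSum_sum_range_mul_of_summable_norm ha.norm hb.norm).congr_fun fun n => ?_
  rw [sum_mul, sum_div]
  refine sum_congr rfl fun k hk => ?_
  obtain ⟨m, rfl⟩ := Nat.exists_eq_add_of_le (Nat.lt_succ_iff.mp (mem_range.mp hk))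
  have hfact : ((k + m).choose k * k ! * m ! : ℝ) = (k + m)! := by
    have := Nat.choose_mul_factorial_mul_factorial (k.le_add_right m)
    rw [Nat.add_sub_cancel_left] at this
    exact_mod_cast this
  have hchoose : ((k + m).choose k : ℝ) ≠ 0 := mod_cast (Nat.choose_pos (k.le_add_right m)).ne'
  rw [Nat.add_sub_cancel_left, ← hfact, pow_add]
  field_simp

theorem sum_range_succ_choose_mul_pow_mul_sub_pow {R : Type*} [CommRing R] (x y w : R) (n : ℕ) :
    ∑ k ∈ range (n + 1), (n.choose k : R) * x ^ k * (y ^ (n - k) - w ^ (n - k)) =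
      (x + y) ^ n - (x + w) ^ n := by
  rw [add_pow, add_pow, ← sum_sub_distrib]
  exact sum_congr rfl fun k _ => by ring

theorem abs_le_of_eq_one_add_sum_mul {μ : ℕ → ℝ} {w : ℕ → ℕ → ℝ} (h0 : μ 0 = 0)
    (hw : ∀ n k, 0 ≤ w n k) (hw1 : ∀ n, 1 ≤ n → ∑ k ∈ range n, w n k = 1)
    (hrec : ∀ n, 1 ≤ n → μ n = 1 + ∑ k ∈ range n, w n k * μ k) (n : ℕ) : |μ n| ≤ n := by
  induction n using Nat.strong_induction_on with
  | _ n ih =>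
    rcases Nat.eq_zero_or_pos n with rfl | hn
    · simp [h0]
    calc |μ n| ≤ 1 + ∑ k ∈ range n, w n k * |μ k| := by
          rw [hrec n hn]
          refine (abs_add_le _ _).trans ?_
          rw [abs_one]
          gcongr
          refine (abs_sum_le_sum_abs _ _).trans_eq (sum_congr rfl fun k _ => ?_)
          rw [abs_mul, abs_of_nonneg (hw n k)]
      _ ≤ 1 + ∑ k ∈ range n, w n k * (n - 1 : ℝ) := by
          gcongr with k hk
          · exact hw n k
          · have : (k : ℝ) + 1 ≤ n := mod_cast mem_range.mp hk
            linarith [ih k (mem_range.mp hk)]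
      _ = n := by rw [← sum_mul, hw1 n hn]; ring

-- `P(I_n = k)` when `p + q = 1`; at `n = 0` the denominator vanishes and the value is the junk `0`.
noncomputable def splitWeight (p q : ℝ) (n k : ℕ) : ℝ :=
  n.choose k * (p ^ k * q ^ (n - k) - p ^ k * (q - p) ^ (n - k)) / (1 - q ^ n)

section SplittingMean

variable {p q : ℝ}

theorem splitWeight_nonneg (hp : 0 ≤ p) (hpq : p ≤ q) (hq : q ≤ 1) (n k : ℕ) :
    0 ≤ splitWeight p q n k := by
  have : (q - p) ^ (n - k) ≤ q ^ (n - k) := pow_le_pow_left₀ (by linarith) (by linarith) _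
  have : q ^ n ≤ 1 := pow_le_one₀ (hp.trans hpq) hq
  unfold splitWeight
  apply div_nonneg _ (by linarith)
  rw [← mul_sub]
  positivity

theorem sum_range_splitWeight (hpq : p + q = 1) {n : ℕ} (hn : q ^ n ≠ 1) :
    ∑ k ∈ range n, splitWeight p q n k = 1 := by
  have h := sum_range_succ_choose_mul_pow_mul_sub_pow p q (q - p) n
  rw [sum_range_succ, Nat.sub_self, pow_zero, pow_zero, sub_self, mul_zero, add_zero, hpq,
    add_sub_cancel, one_pow] at h
  simp only [splitWeight]
  rw [← sum_div, div_eq_one_iff_eq (sub_ne_zero.mpr hn.symm), ← h]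
  exact sum_congr rfl fun k _ => by ring

variable {μ : ℕ → ℝ}

theorem eq_pow_mul_add_sum_choose_of_rec (hμ0 : μ 0 = 0) (hq : ∀ n, 1 ≤ n → q ^ n ≠ 1)
    (hrec : ∀ n, 1 ≤ n → μ n = 1 + ∑ k ∈ range n, splitWeight p q n k * μ k) (n : ℕ) :
    μ n = q ^ n * μ n + (1 - q ^ n) +
      ∑ k ∈ range (n + 1), (n.choose k : ℝ) * (p ^ k * μ k) * (q ^ (n - k) - (q - p) ^ (n - k)) := by
  rcases Nat.eq_zero_or_pos n with rfl | hn
  · simp [hμ0]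
  rw [sum_range_succ, Nat.sub_self, pow_zero, pow_zero, sub_self, mul_zero, add_zero]
  set S := ∑ k ∈ range n, (n.choose k : ℝ) * (p ^ k * μ k) * (q ^ (n - k) - (q - p) ^ (n - k))
  have hsum : ∑ k ∈ range n, splitWeight p q n k * μ k = S / (1 - q ^ n) := by
    rw [sum_div]
    exact sum_congr rfl fun k _ => by simp only [splitWeight]; ring
  have hqn : 1 - q ^ n ≠ 0 := sub_ne_zero.mpr (hq n hn).symm
  have h : μ n * (1 - q ^ n) = (1 - q ^ n) + S := by
    rw [hrec n hn, hsum]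
    field_simp
  linear_combination h

theorem egf_eq_of_eq_pow_mul_add_sum_choose (hμ : ∀ n, |μ n| ≤ n)
    (hcoef : ∀ n, μ n = q ^ n * μ n + (1 - q ^ n) +
      ∑ k ∈ range (n + 1), (n.choose k : ℝ) * (p ^ k * μ k) * (q ^ (n - k) - (q - p) ^ (n - k)))
    (z : ℝ) :
    egf μ z = egf μ (q * z) + (Real.exp z - Real.exp (q * z)) +
      egf μ (p * z) * (Real.exp (q * z) - Real.exp ((q - p) * z)) := by
  have hscale : ∀ c : ℝ, (fun n => c ^ n * μ n * z ^ n / n !) = fun n => μ n * (c * z) ^ n / n ! :=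
    fun c => funext fun n => by ring
  have hμ_sum := summable_mul_pow_div_factorial_of_abs_le hμ
  have hFq : HasSum (fun n => q ^ n * μ n * z ^ n / n !) (egf μ (q * z)) :=
    hscale q ▸ (hμ_sum (q * z)).hasSum
  have hexp : HasSum (fun n => (1 - q ^ n) * z ^ n / n !) (Real.exp z - Real.exp (q * z)) :=
    ((Real.hasSum_pow_div_factorial z).sub (Real.hasSum_pow_div_factorial (q * z))).congr_fun
      fun n => by ring
  have hdiff : HasSum (fun n => (q ^ n - (q - p) ^ n) * z ^ n / n !)
      (Real.exp (q * z) - Real.exp ((q - p) * z)) :=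
    ((Real.hasSum_pow_div_factorial (q * z)).sub
      (Real.hasSum_pow_div_factorial ((q - p) * z))).congr_fun fun n => by
        rw [mul_pow, mul_pow]; ring
  have hconv := hasSum_egf_mul (a := fun k => p ^ k * μ k) (hscale p ▸ hμ_sum (p * z))
    hdiff.summable
  rw [show egf (fun k => p ^ k * μ k) z = egf μ (p * z) from congrArg tsum (hscale p),
    show egf (fun m => q ^ m - (q - p) ^ m) z = _ from hdiff.tsum_eq] at hconv
  refine (hμ_sum z).hasSum.unique (((hFq.add hexp).add hconv).congr_fun fun n => ?_)
  linear_combination hcoef n * z ^ n / n !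

end SplittingMean

/-- The Poisson generating function `f̃₁(z) = e^{-z} ∑_{n≥0} E(X_n) z^n/n!` of the mean
of the binomial splitting process satisfies
`f̃₁(z) = (1 − e^{-pz}) f̃₁(pz) + e^{-pz} f̃₁(qz) + 1 − e^{-pz}`, with `f̃₁(0) = 0`.
Here `μ n = E(X_n)`, determined by `μ 0 = 0` and `μ n = 1 + ∑_k P(I_n = k) μ k`. -/
theorem stmt_6 (p q : ℝ) (hp : 0 < p) (hpq : p ≤ q) (hq : q = 1 - p)
    (μ : ℕ → ℝ) (hμ0 : μ 0 = 0)
    (hμrec : ∀ n, 1 ≤ n → μ n = 1 +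
      ∑ k ∈ Finset.range n, (n.choose k : ℝ) *
        (p ^ k * q ^ (n - k) - p ^ k * (q - p) ^ (n - k)) / (1 - q ^ n) * μ k)
    (f1 : ℝ → ℝ)
    (hf1 : ∀ z, f1 z = Real.exp (-z) * ∑' n : ℕ, μ n * z ^ n / (n.factorial : ℝ)) :
    f1 0 = 0 ∧ ∀ z : ℝ, f1 z = (1 - Real.exp (-(p * z))) * f1 (p * z)
      + Real.exp (-(p * z)) * f1 (q * z) + 1 - Real.exp (-(p * z)) := by
  have hf : ∀ z, f1 z = Real.exp (-z) * egf μ z := hf1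
  have hq1 : q < 1 := by linarith
  have hqn : ∀ n, 1 ≤ n → q ^ n ≠ 1 := fun n hn =>
    (pow_lt_one₀ (hp.le.trans hpq) hq1 (by omega)).ne
  have hbound : ∀ n, |μ n| ≤ n := abs_le_of_eq_one_add_sum_mul hμ0
    (splitWeight_nonneg hp.le hpq hq1.le) (fun n hn => sum_range_splitWeight (by linarith) (hqn n hn))
    hμrec
  have hegf := egf_eq_of_eq_pow_mul_add_sum_choose hbound
    (eq_pow_mul_add_sum_choose_of_rec hμ0 hqn hμrec)
  refine ⟨by rw [hf, egf_zero, hμ0, mul_zero], fun z => ?_⟩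
  have e1 : Real.exp (-z) = Real.exp (-(p * z)) * Real.exp (-(q * z)) := by
    rw [← Real.exp_add]; congr 1; rw [hq]; ring
  have e2 : Real.exp (-z) * Real.exp z = 1 := by rw [← Real.exp_add, neg_add_cancel, Real.exp_zero]
  have e3 : Real.exp (-z) * Real.exp (q * z) = Real.exp (-(p * z)) := by
    rw [← Real.exp_add]; congr 1; rw [hq]; ring
  have e4 : Real.exp (-z) * Real.exp ((q - p) * z) = Real.exp (-(p * z)) * Real.exp (-(p * z)) := by
    rw [← Real.exp_add, ← Real.exp_add]; congr 1; rw [hq]; ring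
  rw [hf, hf, hf, hegf z]
  linear_combination egf μ (q * z) * e1 + e2 + (egf μ (p * z) - 1) * e3 - egf μ (p * z) * e4
end

section
/- Let f̃_1 and f̃_2 be the Poisson generating functions of the first and second moments of X_n, satisfying f̃_1(z) = (1−e^{-pz})f̃_1(pz) + e^{-pz}f̃_1(qz) + 1 − e^{-pz} and f̃_2(z) = (1−e^{-pz})f̃_2(pz) + e^{-pz}f̃_2(qz) + 2(1−e^{-pz})f̃_1(pz) + 1 − e^{-pz}. Then Ṽ(z) := f̃_2(z) − f̃_1(z)^2 satisfies Ṽ(z) = (1−e^{-pz})Ṽ(pz) + e^{-pz}Ṽ(qz) + e^{-pz}(1−e^{-pz})(1 + f̃_1(pz) − f̃_1(qz))^2, with Ṽ(0) = 0. -/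
/-! The two functional equations exhibit `f̃₁(z), f̃₂(z)` as the first two moments of a mixture,
with weights `1 - e^{-pz}` and `e^{-pz}`, of a component with moments `1 + f̃₁(pz)`,
`f̃₂(pz) + 2 f̃₁(pz) + 1` (a shift by one of the `pz` component) and one with moments
`f̃₁(qz)`, `f̃₂(qz)`. The recurrence for `Ṽ` is the law of total variance for that mixture. -/

theorem two_point_mixture_variance {R : Type*} [CommRing R] (w m₁ m₂ s₁ s₂ : R) :
    w * s₁ + (1 - w) * s₂ - (w * m₁ + (1 - w) * m₂) ^ 2
      = w * (s₁ - m₁ ^ 2) + (1 - w) * (s₂ - m₂ ^ 2) + w * (1 - w) * (m₁ - m₂) ^ 2 := by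
  ring

theorem stmt_8_general (p q : ℝ)
    (f1 f2 : ℝ → ℝ) (hf10 : f1 0 = 0) (hf20 : f2 0 = 0)
    (hf1 : ∀ z : ℝ, f1 z = (1 - Real.exp (-(p * z))) * f1 (p * z)
      + Real.exp (-(p * z)) * f1 (q * z) + 1 - Real.exp (-(p * z)))
    (hf2 : ∀ z : ℝ, f2 z = (1 - Real.exp (-(p * z))) * f2 (p * z)
      + Real.exp (-(p * z)) * f2 (q * z)
      + 2 * (1 - Real.exp (-(p * z))) * f1 (p * z) + 1 - Real.exp (-(p * z)))
    (V : ℝ → ℝ) (hV : ∀ z, V z = f2 z - (f1 z) ^ 2) :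
    V 0 = 0 ∧ ∀ z : ℝ, V z = (1 - Real.exp (-(p * z))) * V (p * z)
      + Real.exp (-(p * z)) * V (q * z)
      + Real.exp (-(p * z)) * (1 - Real.exp (-(p * z)))
        * (1 + f1 (p * z) - f1 (q * z)) ^ 2 := by
  refine ⟨by simp [hV, hf10, hf20], fun z => ?_⟩
  rw [hV z, hV (p * z), hV (q * z), hf1 z, hf2 z]
  linear_combination two_point_mixture_variance (1 - Real.exp (-(p * z)))
    (1 + f1 (p * z)) (f1 (q * z)) (f2 (p * z) + 2 * f1 (p * z) + 1) (f2 (q * z))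

/-- The Poissonized variance `Ṽ(z) := f̃₂(z) − f̃₁(z)²` satisfies
`Ṽ(z) = (1−e^{-pz})Ṽ(pz) + e^{-pz}Ṽ(qz) + e^{-pz}(1−e^{-pz})(1 + f̃₁(pz) − f̃₁(qz))²`,
with `Ṽ(0) = 0`, as an algebraic consequence of the functional equations of `f̃₁, f̃₂`. -/
theorem stmt_8 (p q : ℝ) (hp : 0 < p) (hpq : p ≤ q) (hq : q = 1 - p)
    (f1 f2 : ℝ → ℝ) (hf10 : f1 0 = 0) (hf20 : f2 0 = 0)
    (hf1 : ∀ z : ℝ, f1 z = (1 - Real.exp (-(p * z))) * f1 (p * z)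
      + Real.exp (-(p * z)) * f1 (q * z) + 1 - Real.exp (-(p * z)))
    (hf2 : ∀ z : ℝ, f2 z = (1 - Real.exp (-(p * z))) * f2 (p * z)
      + Real.exp (-(p * z)) * f2 (q * z)
      + 2 * (1 - Real.exp (-(p * z))) * f1 (p * z) + 1 - Real.exp (-(p * z)))
    (V : ℝ → ℝ) (hV : ∀ z, V z = f2 z - (f1 z) ^ 2) :
    V 0 = 0 ∧ ∀ z : ℝ, V z = (1 - Real.exp (-(p * z))) * V (p * z)
      + Real.exp (-(p * z)) * V (q * z)
      + Real.exp (-(p * z)) * (1 - Real.exp (-(p * z)))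
        * (1 + f1 (p * z) - f1 (q * z)) ^ 2 :=
  stmt_8_general p q f1 f2 hf10 hf20 hf1 hf2 V hV
end

section
/- Suppose entire functions Ã_{k+1} and Ã_k satisfy Ã_{k+1}(z) = (1 − e^{-pz}) Ã_k(pz) + e^{-pz} Ã_{k+1}(qz) with Ã_{k+1}(0) = 0, and Ã_k is bounded on [0,∞). Then for all z with Re(z) > 0, Ã_{k+1}(z) = ∑_{j≥0} e^{-(1−q^j)z} (1 − e^{-p q^j z}) Ã_k(p q^j z), the series converging absolutely. -/
/-!
Iterating the functional equation `n` times gives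
`F z = ∑_{j<n} e^{-(1-q^j)z} (1 - e^{-pq^j z}) G(pq^j z) + e^{-(1-q^n)z} F(q^n z)`,
because `p + q = 1` makes the exponential prefactors telescope. The remainder tends to
`e^{-z} F 0 = 0`, and the `j`-th term is `O(q^j)` since `1 - e^{-w} = O(w)` near `0` while the
other two factors converge.
-/

open Complex Filter Topology Asymptotics

noncomputable def iterTerm (p q : ℂ) (G : ℂ → ℂ) (z : ℂ) (j : ℕ) : ℂ :=
  exp (-((1 - q ^ j) * z)) * (1 - exp (-(p * q ^ j * z))) * G (p * q ^ j * z)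

lemma one_sub_exp_neg_isBigO : (fun w : ℂ => 1 - exp (-w)) =O[𝓝 0] (fun w => w) := by
  have h : HasDerivAt (fun w : ℂ => 1 - exp (-w)) (exp (-0)) 0 := by
    simpa using ((hasDerivAt_id (0 : ℂ)).neg.cexp).const_sub 1
  simpa using h.isBigO_sub

section FunctionalEquation

variable {p q : ℂ} {F G : ℂ → ℂ}

lemma eq_sum_iterTerm_add (hpq : p + q = 1)
    (hrec : ∀ z, F z = (1 - exp (-(p * z))) * G (p * z) + exp (-(p * z)) * F (q * z))
    (z : ℂ) (n : ℕ) :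
    F z = ∑ j ∈ Finset.range n, iterTerm p q G z j
      + exp (-((1 - q ^ n) * z)) * F (q ^ n * z) := by
  obtain rfl : q = 1 - p := eq_sub_of_add_eq' hpq
  induction n with
  | zero => simp
  | succ n ih =>
    have hexp : exp (-((1 - (1 - p) ^ n) * z)) * exp (-(p * ((1 - p) ^ n * z)))
        = exp (-((1 - (1 - p) ^ (n + 1)) * z)) := by
      rw [← exp_add]; ring_nf
    rw [ih, hrec ((1 - p) ^ n * z), Finset.sum_range_succ, iterTerm, add_assoc, ← hexp, pow_succ']
    ring_nf

lemma tendsto_exp_neg_one_sub_pow_mul (hq : ‖q‖ < 1) (z : ℂ) :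
    Tendsto (fun n : ℕ => exp (-((1 - q ^ n) * z))) atTop (𝓝 (exp (-z))) := by
  simpa [Function.comp_def] using (continuous_exp.tendsto _).comp
    (((tendsto_const_nhds (x := (1 : ℂ)).sub
      (tendsto_pow_atTop_nhds_zero_of_norm_lt_one hq)).mul_const z).neg)

lemma tendsto_exp_mul_comp_pow_mul (hq : ‖q‖ < 1) (hF : ContinuousAt F 0) (hF0 : F 0 = 0)
    (z : ℂ) :
    Tendsto (fun n : ℕ => exp (-((1 - q ^ n) * z)) * F (q ^ n * z)) atTop (𝓝 0) := by
  have hqn := tendsto_pow_atTop_nhds_zero_of_norm_lt_one hq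
  have hF' : Tendsto (fun n : ℕ => F (q ^ n * z)) atTop (𝓝 0) := by
    simpa [hF0, Function.comp_def] using hF.tendsto.comp (by simpa using hqn.mul_const z)
  simpa using (tendsto_exp_neg_one_sub_pow_mul hq z).mul hF'

lemma iterTerm_isBigO (hq : ‖q‖ < 1) (hG : ContinuousAt G 0) (z : ℂ) :
    iterTerm p q G z =O[atTop] (fun j => q ^ j) := by
  have hw : Tendsto (fun j : ℕ => p * q ^ j * z) atTop (𝓝 0) := by
    simpa using ((tendsto_pow_atTop_nhds_zero_of_norm_lt_one hq).const_mul p).mul_const z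
  have hexp : (fun j : ℕ => exp (-((1 - q ^ j) * z))) =O[atTop] (fun _ => (1 : ℂ)) :=
    (tendsto_exp_neg_one_sub_pow_mul hq z).isBigO_one ℂ
  have hG' : (fun j : ℕ => G (p * q ^ j * z)) =O[atTop] (fun _ => (1 : ℂ)) :=
    (hG.tendsto.comp hw).isBigO_one ℂ
  have hmid : (fun j : ℕ => 1 - exp (-(p * q ^ j * z))) =O[atTop] (fun j => q ^ j) := by
    refine (one_sub_exp_neg_isBigO.comp_tendsto hw).trans ?_
    simpa [Function.comp_def, mul_comm, mul_assoc, mul_left_comm] using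
      (isBigO_refl (fun j : ℕ => q ^ j) atTop).const_mul_left (p * z)
  have h := (hexp.mul hmid).mul hG'
  simp only [one_mul, mul_one] at h
  exact h

lemma summable_norm_iterTerm (hq : ‖q‖ < 1) (hG : ContinuousAt G 0) (z : ℂ) :
    Summable (fun j => ‖iterTerm p q G z j‖) :=
  summable_of_isBigO_nat (summable_geometric_of_lt_one (norm_nonneg q) hq)
    (by simpa using (iterTerm_isBigO hq hG z).norm_norm)

lemma hasSum_iterTerm (hpq : p + q = 1) (hq : ‖q‖ < 1) (hG : ContinuousAt G 0)
    (hF : ContinuousAt F 0) (hF0 : F 0 = 0)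
    (hrec : ∀ z, F z = (1 - exp (-(p * z))) * G (p * z) + exp (-(p * z)) * F (q * z)) (z : ℂ) :
    HasSum (iterTerm p q G z) (F z) := by
  rw [hasSum_iff_tendsto_nat_of_summable_norm (summable_norm_iterTerm hq hG z)]
  have h : Tendsto (fun n : ℕ => F z - exp (-((1 - q ^ n) * z)) * F (q ^ n * z)) atTop
      (𝓝 (F z)) := by
    simpa using tendsto_const_nhds.sub (tendsto_exp_mul_comp_pow_mul hq hF hF0 z)
  exact h.congr fun n => (eq_sub_of_add_eq (eq_sum_iterTerm_add hpq hrec z n).symm).symm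

end FunctionalEquation

theorem stmt_11_general (p q : ℝ) (hp : 0 < p) (hp1 : p < 1) (hq : q = 1 - p)
    (Ak Ak1 : ℂ → ℂ) (hAk : Differentiable ℂ Ak) (hAk1 : Differentiable ℂ Ak1)
    (hAk10 : Ak1 0 = 0)
    (hrec : ∀ z : ℂ, Ak1 z = (1 - Complex.exp (-(p * z))) * Ak (p * z)
      + Complex.exp (-(p * z)) * Ak1 (q * z)) :
    ∀ z : ℂ, 0 < z.re →
      Summable (fun j : ℕ => ‖Complex.exp (-((1 - (q : ℂ) ^ j) * z))
        * (1 - Complex.exp (-(p * q ^ j * z))) * Ak (p * q ^ j * z)‖) ∧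
      Ak1 z = ∑' j : ℕ, Complex.exp (-((1 - (q : ℂ) ^ j) * z))
        * (1 - Complex.exp (-(p * q ^ j * z))) * Ak (p * q ^ j * z) := by
  intro z _
  have hpq : (p : ℂ) + q = 1 := by rw [hq]; push_cast; ring
  have hq1 : ‖(q : ℂ)‖ < 1 := by
    rw [Complex.norm_real, Real.norm_eq_abs, abs_lt]
    constructor <;> linarith
  have hsum := hasSum_iterTerm hpq hq1 (hAk 0).continuousAt (hAk1 0).continuousAt hAk10 hrec z
  exact ⟨summable_norm_iterTerm hq1 (hAk 0).continuousAt z, hsum.tsum_eq.symm⟩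

/-- Iterating the functional equation
`Ã_{k+1}(z) = (1 − e^{-pz}) Ã_k(pz) + e^{-pz} Ã_{k+1}(qz)` (with `Ã_{k+1}(0) = 0`
and `Ã_k` bounded on `[0,∞)`) yields, for `Re(z) > 0`,
`Ã_{k+1}(z) = ∑_{j≥0} e^{-(1−q^j)z} (1 − e^{-p q^j z}) Ã_k(p q^j z)`,
the series converging absolutely. -/
theorem stmt_11 (p q : ℝ) (hp : 0 < p) (hp1 : p < 1) (hq : q = 1 - p)
    (Ak Ak1 : ℂ → ℂ) (hAk : Differentiable ℂ Ak) (hAk1 : Differentiable ℂ Ak1)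
    (hAk10 : Ak1 0 = 0)
    (hbdd : ∃ C : ℝ, ∀ x : ℝ, 0 ≤ x → ‖Ak (x : ℂ)‖ ≤ C)
    (hrec : ∀ z : ℂ, Ak1 z = (1 - Complex.exp (-(p * z))) * Ak (p * z)
      + Complex.exp (-(p * z)) * Ak1 (q * z)) :
    ∀ z : ℂ, 0 < z.re →
      Summable (fun j : ℕ => ‖Complex.exp (-((1 - (q : ℂ) ^ j) * z))
        * (1 - Complex.exp (-(p * q ^ j * z))) * Ak (p * q ^ j * z)‖) ∧
      Ak1 z = ∑' j : ℕ, Complex.exp (-((1 - (q : ℂ) ^ j) * z))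
        * (1 - Complex.exp (-(p * q ^ j * z))) * Ak (p * q ^ j * z) :=
  stmt_11_general p q hp hp1 hq Ak Ak1 hAk hAk1 hAk10 hrec
end

section
/- (Pittel's inequality) For all r ≥ 0 and all θ with |θ| ≤ π, writing z = r e^{iθ}, one has |e^z − 1| ≤ (e^r − 1) e^{−r(1−cos θ)/2}. -/
/-!
Write `z = a + b i`. Since `cos b ≥ 1 - b² / 2`, `|e^z - 1|² ≤ e^a (2 cosh a - 2 + b²)`.
As `a² + b² ≤ r²` and
`cosh r - cosh a = 2 sinh ((r + |a|) / 2) sinh ((r - |a|) / 2) ≥ (r² - a²) / 2`,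
this is at most `e^a (2 cosh r - 2) = (e^r - 1)² e^{a - r}`.
-/

open Complex

lemma Real.sq_sub_sq_le_two_mul_cosh_sub_cosh {x y : ℝ} (h : |y| ≤ x) :
    x ^ 2 - y ^ 2 ≤ 2 * (Real.cosh x - Real.cosh y) := by
  rw [← Real.cosh_abs y, ← sq_abs y]
  set u := |y|
  have hsum : 0 ≤ (x + u) / 2 := by linarith [abs_nonneg y]
  have hdiff : 0 ≤ (x - u) / 2 := by linarith
  have hprod :
      Real.cosh x - Real.cosh u = 2 * Real.sinh ((x + u) / 2) * Real.sinh ((x - u) / 2) := by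
    have hx := Real.cosh_add ((x + u) / 2) ((x - u) / 2)
    have hu := Real.cosh_sub ((x + u) / 2) ((x - u) / 2)
    rw [show (x + u) / 2 + (x - u) / 2 = x by ring] at hx
    rw [show (x + u) / 2 - (x - u) / 2 = u by ring] at hu
    rw [hx, hu]
    ring
  have hbound := mul_le_mul (Real.self_le_sinh_iff.2 hsum) (Real.self_le_sinh_iff.2 hdiff) hdiff
    (hsum.trans (Real.self_le_sinh_iff.2 hsum))
  rw [hprod]
  nlinarith

lemma Complex.norm_exp_sub_one_sq_le (z : ℂ) :
    ‖exp z - 1‖ ^ 2 ≤ Real.exp z.re * (2 * Real.cosh z.re - 2 + z.im ^ 2) := by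
  have hnorm : ‖exp z - 1‖ ^ 2 = Real.exp z.re ^ 2 - 2 * Real.exp z.re * Real.cos z.im + 1 := by
    rw [← normSq_eq_norm_sq, normSq_apply]
    simp only [sub_re, sub_im, exp_re, exp_im, one_re, one_im]
    linear_combination Real.exp z.re ^ 2 * Real.sin_sq_add_cos_sq z.im
  have hcosh : Real.exp z.re * (2 * Real.cosh z.re) = Real.exp z.re ^ 2 + 1 := by
    rw [Real.cosh_eq, Real.exp_neg]
    field_simp
  rw [hnorm]
  nlinarith [Real.one_sub_sq_div_two_le_cos (x := z.im), Real.exp_pos z.re]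

lemma Complex.norm_exp_sub_one_le_of_norm_le {z : ℂ} {r : ℝ} (hz : ‖z‖ ≤ r) :
    ‖exp z - 1‖ ≤ (Real.exp r - 1) * Real.exp (-(r - z.re) / 2) := by
  have hr : 0 ≤ r := (norm_nonneg z).trans hz
  have him : z.im ^ 2 ≤ r ^ 2 - z.re ^ 2 := by
    have := pow_le_pow_left₀ (norm_nonneg z) hz 2
    rw [← normSq_eq_norm_sq, normSq_apply] at this
    nlinarith
  have hcosh := Real.sq_sub_sq_le_two_mul_cosh_sub_cosh ((abs_re_le_norm z).trans hz)
  have hrhs : ((Real.exp r - 1) * Real.exp (-(r - z.re) / 2)) ^ 2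
      = Real.exp z.re * (2 * Real.cosh r - 2) := by
    rw [mul_pow, ← Real.exp_nat_mul, Real.cosh_eq, Real.exp_neg,
      show ((2 : ℕ) : ℝ) * (-(r - z.re) / 2) = z.re - r by push_cast; ring, Real.exp_sub]
    field_simp
    ring
  refine le_of_pow_le_pow_left₀ two_ne_zero
    (mul_nonneg (by linarith [Real.one_le_exp hr]) (Real.exp_pos _).le) ?_
  rw [hrhs]
  calc ‖exp z - 1‖ ^ 2 ≤ Real.exp z.re * (2 * Real.cosh z.re - 2 + z.im ^ 2) :=
        norm_exp_sub_one_sq_le z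
    _ ≤ Real.exp z.re * (2 * Real.cosh r - 2) := by
        gcongr
        linarith

theorem stmt_17_general (r θ : ℝ) (hr : 0 ≤ r) :
    ‖Complex.exp ((r : ℂ) * Complex.exp (θ * Complex.I)) - 1‖
      ≤ (Real.exp r - 1) * Real.exp (-(r * (1 - Real.cos θ)) / 2) := by
  have hnorm : ‖(r : ℂ) * exp (θ * I)‖ = r := by
    rw [norm_mul, norm_exp_ofReal_mul_I, mul_one, Complex.norm_of_nonneg hr]
  have hre : ((r : ℂ) * exp (θ * I)).re = r * Real.cos θ := by
    simp [exp_ofReal_mul_I_re]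
  convert norm_exp_sub_one_le_of_norm_le hnorm.le using 4
  rw [hre]
  ring

/-- Pittel's inequality: for `r ≥ 0`, `|θ| ≤ π` and `z = r e^{iθ}`,
`|e^z − 1| ≤ (e^r − 1) e^{−r(1−cos θ)/2}`. -/
theorem stmt_17 (r θ : ℝ) (hr : 0 ≤ r) (hθ : |θ| ≤ Real.pi) :
    ‖Complex.exp ((r : ℂ) * Complex.exp (θ * Complex.I)) - 1‖
      ≤ (Real.exp r - 1) * Real.exp (-(r * (1 - Real.cos θ)) / 2) :=
  stmt_17_general r θ hr
end

section
/- Let 0 < p ≤ q = 1 − p and fix ε ∈ (0, π/2). Then there exists ε₂ > 0 such that for all r ≥ 0 and all θ with ε ≤ |θ| ≤ π, writing z = re^{iθ}, one has |e^{qz} − e^{(q−p)z}| ≤ e^{−ε₂ r} (e^{qr} − e^{(q−p)r}). -/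
/-!
Factor `e^{qz} − e^{(q−p)z} = e^{(q−p)z} (e^{pz} − 1)` and apply Pittel's inequality
`|e^w − 1| ≤ (e^{|w|} − 1) e^{−(|w| − Re w)/2}` to `w = pz`. Pittel's inequality is a
comparison of squares: `|e^w − 1|² = 2e^{Re w}(cosh Re w − cos Im w)`, and
`cosh a − cos b ≤ cosh a − 1 + b²/2 ≤ cosh |w| − 1` because `t ↦ cosh t − t²/2` increases on
`[0, ∞)`. Away from the positive axis, `|z| − Re z = r(1 − cos θ) ≥ r(1 − cos ε)` supplies the
decay rate `ε₂ = (q − p/2)(1 − cos ε)`.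
-/

open Complex

namespace Real

lemma monotoneOn_cosh_sub_sq_div_two : MonotoneOn (fun t ↦ cosh t - t ^ 2 / 2) (Set.Ici 0) := by
  refine monotoneOn_of_hasDerivWithinAt_nonneg (convex_Ici 0) (by fun_prop)
    (fun t _ ↦ ((hasDerivAt_cosh t).sub ((hasDerivAt_pow 2 t).div_const 2)).hasDerivWithinAt) ?_
  intro t ht
  rw [interior_Ici, Set.mem_Ioi] at ht
  simpa using sub_nonneg.mpr (self_le_sinh_iff.mpr ht.le)

lemma sq_sub_sq_div_two_le_cosh_sub_cosh {a ρ : ℝ} (h : |a| ≤ ρ) :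
    (ρ ^ 2 - a ^ 2) / 2 ≤ cosh ρ - cosh a := by
  have := monotoneOn_cosh_sub_sq_div_two (abs_nonneg a) ((abs_nonneg a).trans h) h
  simp only [cosh_abs, sq_abs] at this
  linarith

end Real

namespace Complex

lemma sq_norm_exp_sub_one (w : ℂ) :
    ‖exp w - 1‖ ^ 2 = 2 * Real.exp w.re * (Real.cosh w.re - Real.cos w.im) := by
  have hinv : Real.exp w.re * Real.exp (-w.re) = 1 := by
    rw [← Real.exp_add, add_neg_cancel, Real.exp_zero]
  rw [Complex.sq_norm, normSq_apply, Real.cosh_eq]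
  simp only [sub_re, sub_im, one_re, one_im, exp_re, exp_im, sub_zero]
  linear_combination (Real.exp w.re) ^ 2 * Real.sin_sq_add_cos_sq w.im - hinv

/-- Pittel's inequality. -/
lemma norm_exp_sub_one_le_exp_norm_sub_one_mul (w : ℂ) :
    ‖exp w - 1‖ ≤ (Real.exp ‖w‖ - 1) * Real.exp (-((‖w‖ - w.re) / 2)) := by
  have hcosh : Real.cosh w.re - Real.cos w.im ≤ Real.cosh ‖w‖ - 1 := by
    have hcos := Real.one_sub_sq_div_two_le_cos (x := w.im)
    have hcosh := Real.sq_sub_sq_div_two_le_cosh_sub_cosh (abs_re_le_norm w)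
    have hnorm : ‖w‖ ^ 2 = w.re ^ 2 + w.im ^ 2 := by rw [Complex.sq_norm, normSq_apply]; ring
    linarith
  have hrhs : ((Real.exp ‖w‖ - 1) * Real.exp (-((‖w‖ - w.re) / 2))) ^ 2
      = 2 * Real.exp w.re * (Real.cosh ‖w‖ - 1) := by
    have hinv : Real.exp ‖w‖ * Real.exp (-‖w‖) = 1 := by
      rw [← Real.exp_add, add_neg_cancel, Real.exp_zero]
    rw [mul_pow, ← Real.exp_nat_mul, Real.cosh_eq,
      show (2 : ℕ) * -((‖w‖ - w.re) / 2) = w.re + -‖w‖ by push_cast; ring, Real.exp_add]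
    linear_combination Real.exp w.re * (Real.exp ‖w‖ - 2) * hinv
  rw [← sq_le_sq₀ (norm_nonneg _), sq_norm_exp_sub_one, hrhs]
  · gcongr
  · have := Real.one_le_exp (norm_nonneg w)
    positivity

lemma norm_exp_mul_sub_exp_mul_le {p : ℝ} (hp : 0 ≤ p) (q : ℝ) (z : ℂ) :
    ‖exp (q * z) - exp ((q - p) * z)‖ ≤ Real.exp (-((q - p / 2) * (‖z‖ - z.re))) *
      (Real.exp (q * ‖z‖) - Real.exp ((q - p) * ‖z‖)) := by
  have hfactor : exp (q * z) - exp ((q - p) * z) = exp ((q - p) * z) * (exp (p * z) - 1) := by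
    rw [mul_sub, mul_one, ← exp_add]
    ring_nf
  have hpittel := norm_exp_sub_one_le_exp_norm_sub_one_mul ((p : ℂ) * z)
  rw [norm_mul, norm_real, Real.norm_of_nonneg hp, re_ofReal_mul] at hpittel
  calc ‖exp (q * z) - exp ((q - p) * z)‖
      = Real.exp ((q - p) * z.re) * ‖exp (p * z) - 1‖ := by
        rw [hfactor, norm_mul, norm_exp, ← ofReal_sub, re_ofReal_mul]
    _ ≤ Real.exp ((q - p) * z.re) *
          ((Real.exp (p * ‖z‖) - 1) * Real.exp (-((p * ‖z‖ - p * z.re) / 2))) := by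
        gcongr
    _ = _ := by
        have hexp_q : Real.exp (q * ‖z‖) = Real.exp ((q - p) * ‖z‖) * Real.exp (p * ‖z‖) := by
          rw [← Real.exp_add]
          ring_nf
        have hexp : Real.exp ((q - p) * z.re) * Real.exp (-((p * ‖z‖ - p * z.re) / 2))
            = Real.exp (-((q - p / 2) * (‖z‖ - z.re))) * Real.exp ((q - p) * ‖z‖) := by
          rw [← Real.exp_add, ← Real.exp_add]
          ring_nf
        rw [hexp_q]
        linear_combination (Real.exp (p * ‖z‖) - 1) * hexp

end Complex

theorem stmt_18_general (p q ε : ℝ) (hp : 0 < p) (hpq : p ≤ q)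
    (hε : 0 < ε) (hε2 : ε < Real.pi / 2) :
    ∃ ε₂ : ℝ, 0 < ε₂ ∧ ∀ r θ : ℝ, 0 ≤ r → ε ≤ |θ| → |θ| ≤ Real.pi →
      ‖Complex.exp ((q : ℂ) * ((r : ℂ) * Complex.exp (θ * Complex.I)))
          - Complex.exp (((q : ℂ) - p) * ((r : ℂ) * Complex.exp (θ * Complex.I)))‖
        ≤ Real.exp (-(ε₂ * r)) * (Real.exp (q * r) - Real.exp ((q - p) * r)) := by
  have hcos_ε : Real.cos ε < 1 := by
    simpa using Real.cos_lt_cos_of_nonneg_of_le_pi le_rfl (by linarith [Real.pi_pos]) hε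
  refine ⟨(q - p / 2) * (1 - Real.cos ε), by nlinarith, fun r θ hr hεθ hθπ ↦ ?_⟩
  have hcos_θ : Real.cos θ ≤ Real.cos ε := by
    rw [← Real.cos_abs]
    exact Real.cos_le_cos_of_nonneg_of_le_pi hε.le hθπ hεθ
  have hnorm : ‖(r : ℂ) * exp (θ * I)‖ = r := by
    rw [norm_mul, norm_exp_ofReal_mul_I, norm_real, Real.norm_of_nonneg hr, mul_one]
  have hre : ((r : ℂ) * exp (θ * I)).re = r * Real.cos θ := by
    rw [re_ofReal_mul, exp_ofReal_mul_I_re]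
  refine (norm_exp_mul_sub_exp_mul_le hp.le q _).trans ?_
  rw [hnorm, hre]
  have hexp_le : Real.exp ((q - p) * r) ≤ Real.exp (q * r) := by gcongr; nlinarith
  gcongr Real.exp ?_ * _
  nlinarith [mul_nonneg (by linarith : 0 ≤ q - p / 2) (mul_nonneg hr (sub_nonneg.mpr hcos_θ))]

/-- For `0 < p ≤ q = 1 − p` and `ε ∈ (0, π/2)`, there exists `ε₂ > 0` such that
for `z = re^{iθ}` with `r ≥ 0` and `ε ≤ |θ| ≤ π`,
`|e^{qz} − e^{(q−p)z}| ≤ e^{−ε₂ r} (e^{qr} − e^{(q−p)r})`. -/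
theorem stmt_18 (p q ε : ℝ) (hp : 0 < p) (hpq : p ≤ q) (hq : q = 1 - p)
    (hε : 0 < ε) (hε2 : ε < Real.pi / 2) :
    ∃ ε₂ : ℝ, 0 < ε₂ ∧ ∀ r θ : ℝ, 0 ≤ r → ε ≤ |θ| → |θ| ≤ Real.pi →
      ‖Complex.exp ((q : ℂ) * ((r : ℂ) * Complex.exp (θ * Complex.I)))
          - Complex.exp (((q : ℂ) - p) * ((r : ℂ) * Complex.exp (θ * Complex.I)))‖
        ≤ Real.exp (-(ε₂ * r)) * (Real.exp (q * r) - Real.exp ((q - p) * r)) :=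
  stmt_18_general p q ε hp hpq hε hε2
end
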